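/- Let k ≥ 1, and for each i ∈ {1,…,k} let λ_i ≥ 0, let r > 0, K > 0, T > 0, and let (p_{ij}) with p_{ij} ≥ 0 and Σ_{j≠i} p_{ij} = 1 (when λ_i > 0). Then the system of Volterra integral equations g_i(t) = K e^{−(λ_i + r)(T−t)} + ∫₀^{T−t} λ_i e^{−(λ_i + r)v} Σ_{j≠i} p_{ij} g_j(t+v) dv, for t ∈ [0,T], i ∈ {1,…,k}, has the unique continuous bounded solution g_i(t) = K e^{−r(T−t)} for all i. -/

import Mathlib

/-!
Write `A` for the integral operator of the system. A direct computation using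
`∑_{j ≠ i} p i j = 1` shows that `K e^{-r(T-t)}` solves `g = K e^{-(λ+r)(T-t)} + A g`.
The system is affine, so the difference `h` of two continuous solutions satisfies `h = A h`.
Since `∫₀^s λ e^{-(λ+r)v} dv ≤ λ / (λ + r) < 1`, the operator `A` turns a bound `C` on `|h|`
into the bound `q C` for a fixed `q < 1` (this is where `r > 0` enters), so iterating forces `h = 0`.
-/

open MeasureTheory Real Set Finset Filter

theorem mul_integral_exp_neg_mul (a s : ℝ) :
    a * ∫ v in (0:ℝ)..s, exp (-a * v) = 1 - exp (-a * s) := by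
  have h := intervalIntegral.mul_integral_comp_mul_left (a := 0) (b := s) (f := exp) (-a)
  rw [mul_zero, integral_exp, exp_zero] at h
  linarith

theorem integral_exp_neg_mul_le {a : ℝ} (ha : 0 < a) (s : ℝ) :
    ∫ v in (0:ℝ)..s, exp (-a * v) ≤ a⁻¹ := by
  rw [← one_div, le_div_iff₀ ha, mul_comm, mul_integral_exp_neg_mul]
  linarith [exp_pos (-a * s)]

theorem Finite.exists_nonneg_lt_one_forall_le {ι : Type*} [Finite ι] {f : ι → ℝ}
    (hf : ∀ i, f i < 1) : ∃ q, 0 ≤ q ∧ q < 1 ∧ ∀ i, f i ≤ q := by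
  obtain ⟨q, ⟨hfq, hq0⟩, hq1⟩ := ((eventually_all.2 fun i => eventually_gt_nhds (hf i)).and
    (eventually_gt_nhds zero_lt_one) |>.filter_mono nhdsWithin_le_nhds |>.and
    (self_mem_nhdsWithin (s := Iio (1:ℝ)))).exists
  exact ⟨q, hq0.le, hq1, fun i => (hfq i).le⟩

theorem eq_zero_of_bound_imp_bound_mul {ι β : Type*} {f : ι → β → ℝ} {S : Set β} {q : ℝ}
    (hq0 : 0 ≤ q) (hq1 : q < 1) (hbdd : ∃ C, ∀ i, ∀ x ∈ S, |f i x| ≤ C)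
    (hcontr : ∀ C, 0 ≤ C → (∀ i, ∀ x ∈ S, |f i x| ≤ C) → ∀ i, ∀ x ∈ S, |f i x| ≤ q * C) :
    ∀ i, ∀ x ∈ S, f i x = 0 := by
  obtain ⟨C, hC⟩ := hbdd
  have hpow : ∀ n : ℕ, ∀ i, ∀ x ∈ S, |f i x| ≤ q ^ n * max C 0 := by
    intro n
    induction n with
    | zero => simpa using fun i x hx => (hC i x hx).trans (le_max_left C 0)
    | succ n ih => simpa only [pow_succ', mul_assoc] using hcontr _ (by positivity) ih
  intro i x hx
  have hlim := (tendsto_pow_atTop_nhds_zero_of_lt_one hq0 hq1).mul_const (max C 0)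
  rw [zero_mul] at hlim
  exact abs_nonpos_iff.1 (ge_of_tendsto' hlim fun n => hpow n i x hx)

section SlopeSystem

variable {ι : Type*} [Fintype ι] [DecidableEq ι] (lam : ι → ℝ) (r T : ℝ) (p : ι → ι → ℝ)

noncomputable def slopeOperator (g : ι → ℝ → ℝ) (i : ι) (t : ℝ) : ℝ :=
  ∫ v in (0:ℝ)..(T - t), lam i * exp (-(lam i + r) * v) *
    ∑ j ∈ univ.filter (· ≠ i), p i j * g j (t + v)

theorem add_slopeOperator_exp (hw : ∀ i, lam i * ∑ j ∈ univ.filter (· ≠ i), p i j = lam i)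
    (K : ℝ) (i : ι) (t : ℝ) :
    K * exp (-(lam i + r) * (T - t)) +
      slopeOperator lam r T p (fun _ u => K * exp (-r * (T - u))) i t =
      K * exp (-r * (T - t)) := by
  have hintegrand : ∀ v, lam i * exp (-(lam i + r) * v) *
      ∑ j ∈ univ.filter (· ≠ i), p i j * (K * exp (-r * (T - (t + v)))) =
      K * exp (-r * (T - t)) * (lam i * exp (-lam i * v)) := by
    intro v
    have hexp : exp (-(lam i + r) * v) * exp (-r * (T - (t + v))) =
        exp (-r * (T - t)) * exp (-lam i * v) := by
      rw [← exp_add, ← exp_add]; ring_nf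
    rw [← sum_mul]
    linear_combination (K * exp (-(lam i + r) * v) * exp (-r * (T - (t + v)))) * hw i +
      (lam i * K) * hexp
  have hsplit : exp (-(lam i + r) * (T - t)) = exp (-r * (T - t)) * exp (-lam i * (T - t)) := by
    rw [← exp_add]; ring_nf
  rw [slopeOperator]
  simp_rw [hintegrand]
  rw [intervalIntegral.integral_const_mul, intervalIntegral.integral_const_mul,
    mul_integral_exp_neg_mul, hsplit]
  ring

theorem intervalIntegrable_slopeIntegrand {g : ι → ℝ → ℝ}
    (hg : ∀ j, ContinuousOn (g j) (Icc 0 T)) (i : ι) {t : ℝ} (ht : t ∈ Icc 0 T) :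
    IntervalIntegrable (fun v => lam i * exp (-(lam i + r) * v) *
      ∑ j ∈ univ.filter (· ≠ i), p i j * g j (t + v)) volume 0 (T - t) := by
  have hmaps : MapsTo (fun v => t + v) (uIcc 0 (T - t)) (Icc 0 T) := by
    rw [uIcc_of_le (sub_nonneg.2 ht.2)]
    intro v hv
    constructor <;> linarith [ht.1, hv.1, hv.2]
  refine ContinuousOn.intervalIntegrable ?_
  exact (Continuous.continuousOn (by fun_prop)).mul
    (continuousOn_finsetSum _ fun j _ => continuousOn_const.mul ((hg j).comp (by fun_prop) hmaps))

theorem slopeOperator_sub {g g' : ι → ℝ → ℝ} (hg : ∀ j, ContinuousOn (g j) (Icc 0 T))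
    (hg' : ∀ j, ContinuousOn (g' j) (Icc 0 T)) (i : ι) {t : ℝ} (ht : t ∈ Icc 0 T) :
    slopeOperator lam r T p (g - g') i t =
      slopeOperator lam r T p g i t - slopeOperator lam r T p g' i t := by
  rw [slopeOperator, slopeOperator, slopeOperator, ← intervalIntegral.integral_sub
    (intervalIntegrable_slopeIntegrand lam r T p hg i ht)
    (intervalIntegrable_slopeIntegrand lam r T p hg' i ht)]
  congr 1 with v
  simp only [Pi.sub_apply, mul_sub, sum_sub_distrib]

theorem abs_slopeOperator_le (hlam : ∀ i, 0 ≤ lam i) (hr : 0 < r) (hp : ∀ i j, 0 ≤ p i j)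
    (hw : ∀ i, lam i * ∑ j ∈ univ.filter (· ≠ i), p i j = lam i)
    {g : ι → ℝ → ℝ} {C : ℝ} (hC : 0 ≤ C) (hg : ∀ j, ∀ u ∈ Icc 0 T, |g j u| ≤ C)
    (i : ι) {t : ℝ} (ht : t ∈ Icc 0 T) :
    |slopeOperator lam r T p g i t| ≤ lam i / (lam i + r) * C := by
  have hlr : 0 < lam i + r := by linarith [hlam i]
  have hpoint : ∀ v ∈ Ioc 0 (T - t), ‖lam i * exp (-(lam i + r) * v) *
      ∑ j ∈ univ.filter (· ≠ i), p i j * g j (t + v)‖ ≤ lam i * C * exp (-(lam i + r) * v) := by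
    intro v hv
    have hsum : |∑ j ∈ univ.filter (· ≠ i), p i j * g j (t + v)| ≤
        (∑ j ∈ univ.filter (· ≠ i), p i j) * C := by
      rw [sum_mul]
      refine (abs_sum_le_sum_abs _ _).trans (sum_le_sum fun j _ => ?_)
      rw [abs_mul, abs_of_nonneg (hp i j)]
      exact mul_le_mul_of_nonneg_left
        (hg j _ ⟨by linarith [ht.1, hv.1], by linarith [hv.2]⟩) (hp i j)
    calc _ = lam i * exp (-(lam i + r) * v) *
            |∑ j ∈ univ.filter (· ≠ i), p i j * g j (t + v)| := by
          rw [Real.norm_eq_abs, abs_mul, abs_mul, abs_of_nonneg (hlam i), abs_of_pos (exp_pos _)]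
      _ ≤ lam i * exp (-(lam i + r) * v) * ((∑ j ∈ univ.filter (· ≠ i), p i j) * C) :=
          mul_le_mul_of_nonneg_left hsum (mul_nonneg (hlam i) (exp_pos _).le)
      _ = lam i * C * exp (-(lam i + r) * v) := by
          linear_combination (exp (-(lam i + r) * v) * C) * hw i
  calc |slopeOperator lam r T p g i t|
      ≤ ∫ v in (0:ℝ)..(T - t), lam i * C * exp (-(lam i + r) * v) :=
        intervalIntegral.norm_integral_le_of_norm_le (sub_nonneg.2 ht.2) (ae_of_all _ hpoint)
          (Continuous.intervalIntegrable (by fun_prop) _ _)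
    _ = lam i * C * ∫ v in (0:ℝ)..(T - t), exp (-(lam i + r) * v) :=
        intervalIntegral.integral_const_mul _ _
    _ ≤ lam i * C * (lam i + r)⁻¹ :=
        mul_le_mul_of_nonneg_left (integral_exp_neg_mul_le hlr _) (mul_nonneg (hlam i) hC)
    _ = lam i / (lam i + r) * C := by ring

end SlopeSystem

theorem volterra_system_unique_solution_general (k : ℕ)
    (lam : Fin k → ℝ) (hlam : ∀ i, 0 ≤ lam i)
    (r K T : ℝ) (hr : 0 < r)
    (p : Fin k → Fin k → ℝ) (hp : ∀ i j, 0 ≤ p i j)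
    (hpsum : ∀ i, 0 < lam i → ∑ j ∈ Finset.univ.filter (· ≠ i), p i j = 1) :
    ((∀ i : Fin k, ∀ t ∈ Set.Icc (0:ℝ) T,
        K * Real.exp (-r * (T - t)) =
          K * Real.exp (-(lam i + r) * (T - t)) +
            ∫ v in (0:ℝ)..(T - t), lam i * Real.exp (-(lam i + r) * v) *
              ∑ j ∈ Finset.univ.filter (· ≠ i), p i j * (K * Real.exp (-r * (T - (t + v))))) ∧
      ∀ g : Fin k → ℝ → ℝ,
        (∀ i, ContinuousOn (g i) (Set.Icc 0 T)) →
        (∃ B : ℝ, ∀ i, ∀ t ∈ Set.Icc (0:ℝ) T, |g i t| ≤ B) →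
        (∀ i : Fin k, ∀ t ∈ Set.Icc (0:ℝ) T,
          g i t = K * Real.exp (-(lam i + r) * (T - t)) +
            ∫ v in (0:ℝ)..(T - t), lam i * Real.exp (-(lam i + r) * v) *
              ∑ j ∈ Finset.univ.filter (· ≠ i), p i j * g j (t + v)) →
        ∀ i : Fin k, ∀ t ∈ Set.Icc (0:ℝ) T, g i t = K * Real.exp (-r * (T - t))) := by
  have hw : ∀ i, lam i * ∑ j ∈ univ.filter (· ≠ i), p i j = lam i := fun i => by
    rcases (hlam i).eq_or_lt with h | h
    · rw [← h, zero_mul]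
    · rw [hpsum i h, mul_one]
  set gstar : Fin k → ℝ → ℝ := fun _ u => K * exp (-r * (T - u))
  have hsol : ∀ i t, gstar i t = K * exp (-(lam i + r) * (T - t)) +
      slopeOperator lam r T p gstar i t := fun i t => (add_slopeOperator_exp lam r T p hw K i t).symm
  refine ⟨fun i t _ => hsol i t, fun g hg ⟨B, hB⟩ heq => ?_⟩
  have hfix : ∀ i, ∀ t ∈ Icc 0 T, (g - gstar) i t = slopeOperator lam r T p (g - gstar) i t := by
    intro i t ht
    have hgt : g i t = K * exp (-(lam i + r) * (T - t)) + slopeOperator lam r T p g i t :=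
      heq i t ht
    rw [slopeOperator_sub lam r T p hg (fun j => by fun_prop) i ht, Pi.sub_apply, Pi.sub_apply,
      hgt, hsol]
    ring
  have hbdd : ∃ C, ∀ i, ∀ t ∈ Icc 0 T, |(g - gstar) i t| ≤ C := by
    refine ⟨B + |K|, fun i t ht => (abs_sub _ _).trans (add_le_add (hB i t ht) ?_)⟩
    rw [abs_mul, abs_exp]
    refine mul_le_of_le_one_right (abs_nonneg K) (exp_le_one_iff.2 ?_)
    nlinarith [ht.2]
  obtain ⟨q, hq0, hq1, hq⟩ := Finite.exists_nonneg_lt_one_forall_le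
    (f := fun i => lam i / (lam i + r)) fun i => (div_lt_one (by linarith [hlam i])).2 (by linarith)
  have hzero := eq_zero_of_bound_imp_bound_mul hq0 hq1 hbdd fun C hC hbound i t ht =>
    hfix i t ht ▸ (abs_slopeOperator_le lam r T p hlam hr hp hw hC hbound i ht).trans
      (mul_le_mul_of_nonneg_right (hq i) hC)
  exact fun i t ht => sub_eq_zero.1 (hzero i t ht)

/-- Uniqueness: any continuous bounded solution of the asymptotic-slope Volterra system
equals `g i t = K·e^{−r(T−t)}`; moreover this function is indeed a solution. -/
theorem volterra_system_unique_solution (k : ℕ) (hk : 1 ≤ k)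
    (lam : Fin k → ℝ) (hlam : ∀ i, 0 ≤ lam i)
    (r K T : ℝ) (hr : 0 < r) (hK : 0 < K) (hT : 0 < T)
    (p : Fin k → Fin k → ℝ) (hp : ∀ i j, 0 ≤ p i j)
    (hpsum : ∀ i, 0 < lam i → ∑ j ∈ Finset.univ.filter (· ≠ i), p i j = 1) :
    ((∀ i : Fin k, ∀ t ∈ Set.Icc (0:ℝ) T,
        K * Real.exp (-r * (T - t)) =
          K * Real.exp (-(lam i + r) * (T - t)) +
            ∫ v in (0:ℝ)..(T - t), lam i * Real.exp (-(lam i + r) * v) *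
              ∑ j ∈ Finset.univ.filter (· ≠ i), p i j * (K * Real.exp (-r * (T - (t + v))))) ∧
      ∀ g : Fin k → ℝ → ℝ,
        (∀ i, ContinuousOn (g i) (Set.Icc 0 T)) →
        (∃ B : ℝ, ∀ i, ∀ t ∈ Set.Icc (0:ℝ) T, |g i t| ≤ B) →
        (∀ i : Fin k, ∀ t ∈ Set.Icc (0:ℝ) T,
          g i t = K * Real.exp (-(lam i + r) * (T - t)) +
            ∫ v in (0:ℝ)..(T - t), lam i * Real.exp (-(lam i + r) * v) *
              ∑ j ∈ Finset.univ.filter (· ≠ i), p i j * g j (t + v)) →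
        ∀ i : Fin k, ∀ t ∈ Set.Icc (0:ℝ) T, g i t = K * Real.exp (-r * (T - t))) :=
  volterra_system_unique_solution_general k lam hlam r K T hr p hp hpsum
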